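/- arXiv:2212.00746 — 4 statements merged into one kernel-verified Lean document; each statement's English description precedes it below -/
import Mathlib

section
/- Let n ≥ 1, d1, d2 ≥ 1, T = d1 + d2 − 1 and D = max(d1, d2). Let H be a (d1·n)×(d2·n) real block Hankel matrix with n×n blocks H_1,…,H_T that admits a positive semidefinite square extension H□ ∈ ℝ^{Dn×Dn} of rank r whose first block H_1 has rank r and at least one other block H_j, j > 1, has rank r. Then there exist a real n×r matrix U with orthonormal columns, a positive definite diagonal r×r matrix Σ, and an r×r real matrix N that is Σ-self-adjoint (i.e., NΣ = ΣN*), such that H_k = U N^{k−1} Σ U* for every k ∈ [T], and H admits the generalized Vandermonde decomposition H = V_{d1}(U,N) Σ V_{d2}(U,N)*, where V_m(U,N) denotes the (n·m)×r block column matrix with j-th block U N^{j−1} for j ∈ [m]. -/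
/-!
Write the positive semidefinite extension as `V Σ Vᵀ` with `V` of width `r`; its block rows
`Y_j` (of size `r × n`) give a Gram representation `K_{i+j} = Y_iᵀ Σ Y_j`. As `K_0 = Y_0ᵀ Σ Y_0`
has rank `r`, `Y_0` is onto, so `Y_j = Y_0 W_j` with `W_0 = 1`, and diagonalizing
`K_0 = U Σ' Uᵀ` turns the Gram representation into `K_{i+j} = Z_iᵀ Σ' Z_j` with `Z_0 = Uᵀ`.
Comparing `K_{0+(j+1)}` with `K_{1+j}` gives `Σ' Z_{j+1} = N Σ' Z_j` for `N = Uᵀ Z_1ᵀ`, hence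
`Σ' Z_j = N^j Σ' Uᵀ`, while `K_{0+1} = K_{1+0}` makes `N` `Σ'`-self-adjoint. Together these give
`K_k = U N^k Σ' Uᵀ`, and the Vandermonde factorization is the same identity read blockwise.
-/

noncomputable section

open Matrix

/-- The block Hankel operator. -/
def blockHankel (n d1 d2 T : ℕ) (X : Fin T → Matrix (Fin n) (Fin n) ℝ) :
    Matrix (Fin d1 × Fin n) (Fin d2 × Fin n) ℝ :=
  Matrix.of fun p q =>
    if h : p.1.val + q.1.val < T then X ⟨p.1.val + q.1.val, h⟩ p.2 q.2 else 0

/-- The generalized Vandermonde matrix `V_m(U,N)`, obtained by vertically stacking the blocks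
`U N^0, U N^1, …, U N^{m−1}`. -/
def vandStack (n r m : ℕ) (U : Matrix (Fin n) (Fin r) ℝ) (N : Matrix (Fin r) (Fin r) ℝ) :
    Matrix (Fin m × Fin n) (Fin r) ℝ :=
  Matrix.of fun p l => (U * N ^ p.1.val) p.2 l

namespace Matrix

theorem mul_diagonal_mul_transpose_eq_submatrix {R m k ι : Type*} [CommSemiring R]
    [Fintype k] [Fintype ι] [DecidableEq k] [DecidableEq ι] (V : Matrix m k R) (μ : k → R)
    {f : ι → k} (hf : f.Injective) (hμ : ∀ i ∉ Set.range f, μ i = 0) :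
    V * diagonal μ * Vᵀ = V.submatrix id f * diagonal (μ ∘ f) * (V.submatrix id f)ᵀ := by
  ext a b
  rw [mul_apply, mul_apply]
  simp only [mul_diagonal, transpose_apply, submatrix_apply, id, Function.comp_apply]
  exact (Fintype.sum_of_injective f hf _ _ (fun i hi => by simp [hμ i hi]) fun _ => rfl).symm

theorem transpose_mul_self_submatrix_eq_one {R m k ι : Type*} [CommSemiring R] [Fintype m]
    [DecidableEq k] [DecidableEq ι] {V : Matrix m k R} (hV : Vᵀ * V = 1) {f : ι → k}
    (hf : f.Injective) : (V.submatrix id f)ᵀ * V.submatrix id f = 1 := by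
  rw [transpose_submatrix, ← submatrix_mul _ _ _ id _ Function.bijective_id, hV,
    submatrix_one _ hf]

theorem PosSemidef.exists_orthonormal_diagonal {m : Type*} [Fintype m] [DecidableEq m]
    {M : Matrix m m ℝ} (hM : M.PosSemidef) {r : ℕ} (hr : M.rank = r) :
    ∃ (U : Matrix m (Fin r) ℝ) (σ : Fin r → ℝ),
      Uᵀ * U = 1 ∧ (∀ l, 0 < σ l) ∧ M = U * diagonal σ * Uᵀ := by
  set V : Matrix m m ℝ := (hM.1.eigenvectorUnitary : Matrix m m ℝ)
  set μ := hM.1.eigenvalues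
  have hVV : Vᵀ * V = 1 := Unitary.coe_star_mul_self hM.1.eigenvectorUnitary
  have hMV : M = V * diagonal μ * Vᵀ := by
    conv_lhs => rw [hM.1.spectral_theorem, Unitary.conjStarAlgAut_apply]
    rfl
  let e : Fin r ≃ {i // μ i ≠ 0} :=
    (Fintype.equivFinOfCardEq (hr ▸ hM.1.rank_eq_card_non_zero_eigs).symm).symm
  have hf : (Subtype.val ∘ e).Injective := Subtype.val_injective.comp e.injective
  refine ⟨V.submatrix id (Subtype.val ∘ e), μ ∘ Subtype.val ∘ e,
    transpose_mul_self_submatrix_eq_one hVV hf,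
    fun l => (hM.eigenvalues_nonneg _).lt_of_ne (e l).2.symm, ?_⟩
  rw [hMV, mul_diagonal_mul_transpose_eq_submatrix V μ hf]
  intro i hi
  by_contra h
  exact hi ⟨e.symm ⟨i, h⟩, by simp⟩

theorem exists_mul_eq_of_rank_eq_card {K m k p : Type*} [Field K] [Fintype m]
    [DecidableEq m] [Fintype k] {X : Matrix m k K} (hX : X.rank = Fintype.card m)
    (Y : Matrix m p K) : ∃ W : Matrix k p K, Y = X * W := by
  have hsurj : Function.Surjective X.mulVec := by
    have : LinearMap.range X.mulVecLin = ⊤ :=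
      Submodule.eq_top_of_finrank_eq (by rw [Module.finrank_fintype_fun_eq_card]; exact hX)
    exact LinearMap.range_eq_top.mp this
  obtain ⟨B, hB⟩ := mulVec_surjective_iff_exists_right_inverse.mp hsurj
  exact ⟨B * Y, by rw [← Matrix.mul_assoc, hB, Matrix.one_mul]⟩

theorem exists_orthonormal_gram {m : Type*} [Fintype m] [DecidableEq m] {r D : ℕ}
    {H : ℕ → Matrix m m ℝ} {S : Matrix (Fin r) (Fin r) ℝ} {Y : ℕ → Matrix (Fin r) m ℝ}
    (hS : S.PosSemidef) (hY : ∀ i j, i < D → j < D → H (i + j) = (Y i)ᵀ * S * Y j)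
    (hD : 0 < D) (hrank : (H 0).rank = r) :
    ∃ (U : Matrix m (Fin r) ℝ) (σ : Fin r → ℝ) (Z : ℕ → Matrix (Fin r) m ℝ),
      Uᵀ * U = 1 ∧ (∀ l, 0 < σ l) ∧ Z 0 = Uᵀ ∧
        ∀ i j, i < D → j < D → H (i + j) = (Z i)ᵀ * diagonal σ * Z j := by
  have hY0 : H 0 = (Y 0)ᵀ * S * Y 0 := hY 0 0 hD hD
  obtain ⟨U, σ, hU, hσ, hH0⟩ :=
    (hY0 ▸ hS.conjTranspose_mul_mul_same (Y 0)).exists_orthonormal_diagonal hrank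
  have hrankY0 : (Y 0).rank = Fintype.card (Fin r) := by
    refine le_antisymm (rank_le_card_height _) ?_
    calc Fintype.card (Fin r) = (H 0).rank := by rw [Fintype.card_fin, hrank]
      _ ≤ (Y 0).rank := hY0 ▸ rank_mul_le_right _ _
  have hW : ∀ j, ∃ W : Matrix m m ℝ, Y j = Y 0 * W ∧ (j = 0 → W = 1) := fun j => by
    by_cases hj : j = 0
    · exact ⟨1, by rw [hj, Matrix.mul_one], fun _ => rfl⟩
    · obtain ⟨W, hW⟩ := exists_mul_eq_of_rank_eq_card hrankY0 (Y j)
      exact ⟨W, hW, fun h => absurd h hj⟩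
  choose W hYW hW0 using hW
  refine ⟨U, σ, fun j => Uᵀ * W j, hU, hσ, by simp only [hW0 0 rfl, Matrix.mul_one],
    fun i j hi hj => ?_⟩
  calc H (i + j) = (W i)ᵀ * ((Y 0)ᵀ * S * Y 0) * W j := by
        rw [hY i j hi hj, hYW i, hYW j, transpose_mul]
        simp only [Matrix.mul_assoc]
    _ = (Uᵀ * W i)ᵀ * diagonal σ * (Uᵀ * W j) := by
        rw [← hY0, hH0, transpose_mul, transpose_transpose]
        simp only [Matrix.mul_assoc]

variable {R m r : Type*} [CommSemiring R] [Fintype r] [DecidableEq r]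

theorem pow_mul_eq_mul_transpose_pow {S N : Matrix r r R} (h : N * S = S * Nᵀ) (k : ℕ) :
    N ^ k * S = S * (N ^ k)ᵀ := by
  rw [transpose_pow]
  exact ((show SemiconjBy S Nᵀ N from h.symm).pow_right k).symm

theorem mul_pow_add_mul_mul_transpose {S N : Matrix r r R} (h : N * S = S * Nᵀ)
    (U : Matrix m r R) (i j : ℕ) : U * N ^ (i + j) * S * Uᵀ = U * N ^ i * S * (U * N ^ j)ᵀ := by
  rw [transpose_mul, pow_add]
  simp only [Matrix.mul_assoc]
  rw [← Matrix.mul_assoc (N ^ j), pow_mul_eq_mul_transpose_pow h, Matrix.mul_assoc]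

variable [Fintype m] {U : Matrix m r R} {S : Matrix r r R} {Z : ℕ → Matrix r m R}
  {H : ℕ → Matrix m m R} {D : ℕ}

theorem mul_eq_pow_mul_of_hankel_gram (hU : Uᵀ * U = 1) (hZ0 : Z 0 = Uᵀ)
    (hH : ∀ i j, i < D → j < D → H (i + j) = (Z i)ᵀ * S * Z j) {j : ℕ} (hj : j < D) :
    S * Z j = (Uᵀ * (Z 1)ᵀ) ^ j * S * Uᵀ := by
  induction j with
  | zero => rw [hZ0, pow_zero, Matrix.one_mul]
  | succ j ih =>
    have hshift : U * (S * Z (j + 1)) = (Z 1)ᵀ * (S * Z j) := by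
      have h0 := hH 0 (j + 1) (by omega) hj
      have h1 := hH 1 j (by omega) (by omega)
      rw [add_comm] at h1
      rw [zero_add, h1, hZ0, transpose_transpose] at h0
      simpa only [Matrix.mul_assoc] using h0.symm
    calc S * Z (j + 1) = Uᵀ * (U * (S * Z (j + 1))) := by
          rw [← Matrix.mul_assoc, hU, Matrix.one_mul]
      _ = Uᵀ * (Z 1)ᵀ * (S * Z j) := by rw [hshift, Matrix.mul_assoc]
      _ = (Uᵀ * (Z 1)ᵀ) ^ (j + 1) * S * Uᵀ := by
          rw [ih (by omega), pow_succ']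
          simp only [Matrix.mul_assoc]

theorem shift_mul_eq_mul_transpose_of_hankel_gram (hU : Uᵀ * U = 1) (hZ0 : Z 0 = Uᵀ)
    (hH : ∀ i j, i < D → j < D → H (i + j) = (Z i)ᵀ * S * Z j) (hD : 1 < D) :
    Uᵀ * (Z 1)ᵀ * S = S * (Uᵀ * (Z 1)ᵀ)ᵀ := by
  have hsymm : U * S * Z 1 = (Z 1)ᵀ * S * Uᵀ := by
    have h01 := hH 0 1 (by omega) hD
    rwa [hH 1 0 hD (by omega), hZ0, transpose_transpose, eq_comm] at h01
  calc Uᵀ * (Z 1)ᵀ * S = Uᵀ * ((Z 1)ᵀ * S * Uᵀ) * U := by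
        simp only [Matrix.mul_assoc, hU, Matrix.mul_one]
    _ = S * (Uᵀ * (Z 1)ᵀ)ᵀ := by
        rw [← hsymm, transpose_mul, transpose_transpose]
        simp only [← Matrix.mul_assoc, hU, Matrix.one_mul, transpose_transpose]

theorem exists_hankel_eq_pow (hU : Uᵀ * U = 1) (hS : Sᵀ = S) (hZ0 : Z 0 = Uᵀ)
    (hH : ∀ i j, i < D → j < D → H (i + j) = (Z i)ᵀ * S * Z j) :
    ∃ N : Matrix r r R, N * S = S * Nᵀ ∧ ∀ k < 2 * D - 1, H k = U * N ^ k * S * Uᵀ := by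
  obtain hD | hD := le_or_gt D 1
  · refine ⟨1, by simp, fun k hk => ?_⟩
    obtain rfl : k = 0 := by omega
    rw [← add_zero 0, hH 0 0 (by omega) (by omega), hZ0]
    simp
  have hN := shift_mul_eq_mul_transpose_of_hankel_gram hU hZ0 hH hD
  have hZ : ∀ j < D, S * Z j = (Uᵀ * (Z 1)ᵀ) ^ j * S * Uᵀ := fun j hj =>
    mul_eq_pow_mul_of_hankel_gram hU hZ0 hH hj
  generalize Uᵀ * (Z 1)ᵀ = N at hN hZ
  refine ⟨N, hN, fun k hk => ?_⟩
  obtain ⟨i, j, rfl, hi, hj⟩ : ∃ i j, k = i + j ∧ i < D ∧ j < D :=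
    ⟨min k (D - 1), k - min k (D - 1), by omega, by omega, by omega⟩
  calc H (i + j) = (S * Z i)ᵀ * Z j := by rw [hH i j hi hj, transpose_mul, hS]
    _ = U * (S * (N ^ i)ᵀ) * Z j := by
      rw [hZ i hi, transpose_mul, transpose_mul, transpose_transpose, hS]
    _ = U * N ^ (i + j) * S * Uᵀ := by
      rw [← pow_mul_eq_mul_transpose_pow hN i, pow_add]
      simp only [Matrix.mul_assoc, hZ j hj]

end Matrix

def hankelSeq {n T : ℕ} (X : Fin T → Matrix (Fin n) (Fin n) ℝ) (k : ℕ) :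
    Matrix (Fin n) (Fin n) ℝ :=
  if h : k < T then X ⟨k, h⟩ else 0

theorem hankelSeq_of_lt {n T : ℕ} (X : Fin T → Matrix (Fin n) (Fin n) ℝ) {k : ℕ} (hk : k < T) :
    hankelSeq X k = X ⟨k, hk⟩ :=
  dif_pos hk

theorem blockHankel_apply {n d1 d2 T : ℕ} (X : Fin T → Matrix (Fin n) (Fin n) ℝ)
    (i : Fin d1) (a : Fin n) (j : Fin d2) (b : Fin n) :
    blockHankel n d1 d2 T X (i, a) (j, b) = hankelSeq X (i + j) a b := by
  simp only [blockHankel, hankelSeq, of_apply]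
  split_ifs <;> rfl

theorem vandStack_mul_mul_transpose_apply {n r d1 d2 : ℕ} (U : Matrix (Fin n) (Fin r) ℝ)
    (N S : Matrix (Fin r) (Fin r) ℝ) (i : Fin d1) (a : Fin n) (j : Fin d2) (b : Fin n) :
    (vandStack n r d1 U N * S * (vandStack n r d2 U N)ᵀ) (i, a) (j, b) =
      (U * N ^ (i : ℕ) * S * (U * N ^ (j : ℕ))ᵀ) a b := by
  simp only [mul_apply, transpose_apply, vandStack, of_apply]

theorem exists_gram_of_blockHankel_posSemidef {n D T r : ℕ}
    {K : Fin T → Matrix (Fin n) (Fin n) ℝ} (hpsd : (blockHankel n D D T K).PosSemidef)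
    (hrank : (blockHankel n D D T K).rank = r) :
    ∃ (S : Matrix (Fin r) (Fin r) ℝ) (Y : ℕ → Matrix (Fin r) (Fin n) ℝ), S.PosSemidef ∧
      ∀ i j, i < D → j < D → hankelSeq K (i + j) = (Y i)ᵀ * S * Y j := by
  obtain ⟨V, σ, -, hσ, hV⟩ := hpsd.exists_orthonormal_diagonal hrank
  refine ⟨diagonal σ, fun j => of fun l a => if h : j < D then V (⟨j, h⟩, a) l else 0,
    posSemidef_diagonal_iff.mpr fun l => (hσ l).le, fun i j hi hj => ?_⟩
  ext a b
  have hG := congrFun (congrFun hV (⟨i, hi⟩, a)) (⟨j, hj⟩, b)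
  rw [blockHankel_apply] at hG
  simp [hG, mul_apply, hi, hj]

/-- Generalized Vandermonde decomposition: if a block Hankel matrix with blocks
`H_1, …, H_T` admits a positive semidefinite square extension of rank `r` whose first block
has rank `r` and at least one other block has rank `r`, then there exist `U ∈ ℝ^{n×r}` with
orthonormal columns, a positive definite diagonal `Σ`, and a `Σ`-self-adjoint `N`
(`NΣ = ΣN*`) such that `H_k = U N^{k−1} Σ U*` for all `k ∈ [T]` and
`H = V_{d1}(U,N) Σ V_{d2}(U,N)*`. -/
theorem blockHankel_generalized_vandermonde (n d1 d2 T D r : ℕ)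
    (hd1 : 1 ≤ d1)
    (hT : T = d1 + d2 - 1) (hD : D = max d1 d2)
    (Hb : Fin T → Matrix (Fin n) (Fin n) ℝ)
    (K : Fin (2 * D - 1) → Matrix (Fin n) (Fin n) ℝ)
    (hext : ∀ k : Fin T, K ⟨k.val, by
        have h1 := le_max_left d1 d2
        have h2 := le_max_right d1 d2
        have h3 := k.isLt
        omega⟩ = Hb k)
    (hpsd : (blockHankel n D D (2 * D - 1) K).PosSemidef)
    (hrank : (blockHankel n D D (2 * D - 1) K).rank = r)
    (hfirst : (K ⟨0, by
        have h1 := le_max_left d1 d2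
        omega⟩).rank = r) :
    ∃ (U : Matrix (Fin n) (Fin r) ℝ) (σ : Fin r → ℝ) (N : Matrix (Fin r) (Fin r) ℝ),
      Uᵀ * U = 1 ∧ (∀ l, 0 < σ l) ∧
        N * Matrix.diagonal σ = Matrix.diagonal σ * Nᵀ ∧
        (∀ k : Fin T, Hb k = U * N ^ k.val * Matrix.diagonal σ * Uᵀ) ∧
        blockHankel n d1 d2 T Hb
          = vandStack n r d1 U N * Matrix.diagonal σ * (vandStack n r d2 U N)ᵀ := by
  have hd1D := le_max_left d1 d2
  have hd2D := le_max_right d1 d2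
  obtain ⟨S, Y, hS, hY⟩ := exists_gram_of_blockHankel_posSemidef hpsd hrank
  obtain ⟨U, σ, Z, hU, hσ, hZ0, hZ⟩ :=
    exists_orthonormal_gram hS hY (by omega) (by rwa [hankelSeq_of_lt K (by omega)])
  obtain ⟨N, hN, hKN⟩ := exists_hankel_eq_pow hU (diagonal_transpose σ) hZ0 hZ
  have hHb (k : Fin T) : Hb k = U * N ^ k.val * diagonal σ * Uᵀ := by
    rw [← hext k, ← hKN k (by omega), hankelSeq_of_lt]
  refine ⟨U, σ, N, hU, hσ, hN, hHb, ?_⟩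
  ext ⟨i, a⟩ ⟨j, b⟩
  rw [blockHankel_apply, hankelSeq_of_lt Hb (by omega), hHb, vandStack_mul_mul_transpose_apply,
    mul_pow_add_mul_mul_transpose hN]

end
end

section
/- Let n, d1, d2 ≥ 1 and T = d1 + d2 − 1. For every i, j ∈ [n] and t ∈ [T], the block Hankel image of the standard basis tuple satisfies ‖H(E_{i,j,t})‖_F = √(min(t, T+1−t, d1, d2)), and the operator H*H (the composition of H with its adjoint with respect to the Frobenius inner products) satisfies H*H(E_{i,j,t}) = min(t, T+1−t, d1, d2) · E_{i,j,t}. -/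
noncomputable section

open Matrix

/-- The Frobenius norm of a real matrix. -/
def frobNorm {α β : Type*} [Fintype α] [Fintype β] (M : Matrix α β ℝ) : ℝ :=
  Real.sqrt (∑ i, ∑ j, (M i j) ^ 2)

/-- The Frobenius inner product of two real matrices. -/
def frobInner {α β : Type*} [Fintype α] [Fintype β] (M N : Matrix α β ℝ) : ℝ :=
  ∑ i, ∑ j, M i j * N i j

/-- The standard basis tuple `E_{i,j,t}`: the `t`-th component is the matrix unit at `(i,j)`,
the other components vanish. -/
def Etuple (n T : ℕ) (i j : Fin n) (t : Fin T) : Fin T → Matrix (Fin n) (Fin n) ℝ :=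
  fun s => if s = t then Matrix.single i j 1 else 0


/-!
Writing `A_t` for the `d1 × d2` indicator matrix of the antidiagonal `{(p, q) | p + q = t}`, the
image `H(E_{i,j,t})` is the Kronecker product `A_t ⊗ e_i e_jᵀ`. Frobenius inner products factor
over Kronecker products, distinct antidiagonals are disjoint, and the `t`-th antidiagonal of a
`d1 × d2` grid has `min(t + 1, T - t, d1, d2)` cells (0-based `t`). Hence the images `H(E_{i,j,t})`
are pairwise orthogonal with squared norms `min(t + 1, T - t, d1, d2)`, and since
`⟨H*H E, E'⟩ = ⟨H E, H E'⟩`, the operator `H*H` is diagonal in the basis `E_{i,j,t}`.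
-/

open Finset
open scoped Kronecker

section Frobenius

variable {α β γ δ : Type*} [Fintype α] [Fintype β] [Fintype γ] [Fintype δ]

lemma frobInner_eq_trace (M N : Matrix α β ℝ) : frobInner M N = trace (Mᵀ * N) := by
  simp only [frobInner, trace, Matrix.diag, mul_apply, transpose_apply]
  exact Finset.sum_comm

lemma frobNorm_eq_sqrt_frobInner (M : Matrix α β ℝ) : frobNorm M = √(frobInner M M) := by
  simp only [frobNorm, frobInner, sq]

lemma frobInner_kronecker (A C : Matrix α β ℝ) (B D : Matrix γ δ ℝ) :
    frobInner (A ⊗ₖ B) (C ⊗ₖ D) = frobInner A C * frobInner B D := by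
  rw [frobInner_eq_trace, frobInner_eq_trace, frobInner_eq_trace, ← kroneckerMap_transpose,
    ← mul_kronecker_mul, trace_kronecker]

lemma frobInner_single_one_left [DecidableEq α] [DecidableEq β] (a : α) (b : β)
    (M : Matrix α β ℝ) : frobInner (single a b 1) M = M a b := by
  simp [frobInner, single_apply, ite_and]

end Frobenius

def antidiagIndicator (d1 d2 k : ℕ) : Matrix (Fin d1) (Fin d2) ℝ :=
  of fun p q => if p.val + q.val = k then 1 else 0

lemma card_filter_fin_add_eq (d1 d2 k : ℕ) :
    #{x : Fin d1 × Fin d2 | x.1.val + x.2.val = k} =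
      min (min (k + 1) (d1 + d2 - 1 - k)) (min d1 d2) := by
  have : #{x : Fin d1 × Fin d2 | x.1.val + x.2.val = k} =
      #(Ico (k + 1 - d2) (min (k + 1) d1)) := by
    -- a cell `(p, k - p)` of the antidiagonal is determined by its row `p`
    refine card_bij (fun x _ => x.1.val) ?_ ?_ ?_
    · intro x hx
      simp only [mem_filter, mem_univ, true_and] at hx
      simp only [mem_Ico]
      omega
    · intro x hx y hy hxy
      simp only [mem_filter, mem_univ, true_and] at hx hy
      exact Prod.ext (Fin.ext hxy) (Fin.ext (by omega))
    · intro a ha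
      simp only [mem_Ico] at ha
      exact ⟨(⟨a, by omega⟩, ⟨k - a, by omega⟩), by simp; omega, rfl⟩
  rw [this, Nat.card_Ico]
  omega

lemma frobInner_antidiagIndicator (d1 d2 k l : ℕ) :
    frobInner (antidiagIndicator d1 d2 k) (antidiagIndicator d1 d2 l) =
      if k = l then (#{x : Fin d1 × Fin d2 | x.1.val + x.2.val = k} : ℝ) else 0 := by
  simp only [frobInner, antidiagIndicator, of_apply, mul_ite, mul_one, mul_zero]
  split_ifs with hkl
  · subst hkl
    rw [← Fintype.sum_prod_type']
    simp only [← ite_and, and_self]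
    rw [sum_boole]
  · refine sum_eq_zero fun p _ => sum_eq_zero fun q _ => ?_
    split_ifs <;> first | rfl | omega

lemma blockHankel_Etuple (n d1 d2 T : ℕ) (i j : Fin n) (t : Fin T) :
    blockHankel n d1 d2 T (Etuple n T i j t) = antidiagIndicator d1 d2 t ⊗ₖ single i j 1 := by
  ext ⟨p, a⟩ ⟨q, b⟩
  simp only [blockHankel, Etuple, antidiagIndicator, kroneckerMap_apply, of_apply]
  split_ifs <;> simp_all [Fin.ext_iff]

lemma sum_frobInner_Etuple (n T : ℕ) (a b : Fin n) (s : Fin T)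
    (Y : Fin T → Matrix (Fin n) (Fin n) ℝ) :
    ∑ u, frobInner (Etuple n T a b s u) (Y u) = Y s a b := by
  rw [sum_eq_single s (fun u _ hu => by simp [Etuple, hu, frobInner]) (by simp)]
  simp [Etuple, frobInner_single_one_left]

lemma frobInner_blockHankel_Etuple (n d1 d2 T : ℕ) (a b i j : Fin n) (s t : Fin T) :
    frobInner (blockHankel n d1 d2 T (Etuple n T a b s))
        (blockHankel n d1 d2 T (Etuple n T i j t)) =
      #{x : Fin d1 × Fin d2 | x.1.val + x.2.val = t} * Etuple n T i j t s a b := by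
  rw [blockHankel_Etuple, blockHankel_Etuple, frobInner_kronecker, frobInner_antidiagIndicator,
    frobInner_single_one_left]
  by_cases hst : s = t
  · simp [hst, Etuple]
  · simp [hst, Etuple, Fin.val_inj]

lemma apply_eq_frobInner_of_adjoint {α β : Type*} [Fintype α] [Fintype β] {n T : ℕ}
    (H : (Fin T → Matrix (Fin n) (Fin n) ℝ) → Matrix α β ℝ)
    (Hadj : Matrix α β ℝ → (Fin T → Matrix (Fin n) (Fin n) ℝ))
    (hHadj : ∀ X M, frobInner (H X) M = ∑ t, frobInner (X t) (Hadj M t))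
    (M : Matrix α β ℝ) (s : Fin T) (a b : Fin n) :
    Hadj M s a b = frobInner (H (Etuple n T a b s)) M := by
  rw [hHadj, sum_frobInner_Etuple]

theorem blockHankel_Etuple_norm_and_adjoint_general (n d1 d2 T : ℕ) (hT : T = d1 + d2 - 1)
    (Hadj : Matrix (Fin d1 × Fin n) (Fin d2 × Fin n) ℝ → (Fin T → Matrix (Fin n) (Fin n) ℝ))
    (hHadj : ∀ (X : Fin T → Matrix (Fin n) (Fin n) ℝ)
        (M : Matrix (Fin d1 × Fin n) (Fin d2 × Fin n) ℝ),
        frobInner (blockHankel n d1 d2 T X) M = ∑ t, frobInner (X t) (Hadj M t))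
    (i j : Fin n) (t : Fin T) :
    frobNorm (blockHankel n d1 d2 T (Etuple n T i j t))
        = Real.sqrt ((min (min (t.val + 1) (T - t.val)) (min d1 d2) : ℕ) : ℝ) ∧
      Hadj (blockHankel n d1 d2 T (Etuple n T i j t))
        = ((min (min (t.val + 1) (T - t.val)) (min d1 d2) : ℕ) : ℝ) • Etuple n T i j t := by
  have hcard : #{x : Fin d1 × Fin d2 | x.1.val + x.2.val = t.val} =
      min (min (t.val + 1) (T - t.val)) (min d1 d2) := by
    rw [card_filter_fin_add_eq, ← hT]
  constructor
  · rw [frobNorm_eq_sqrt_frobInner, frobInner_blockHankel_Etuple, hcard]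
    simp [Etuple]
  · ext s a b
    rw [apply_eq_frobInner_of_adjoint _ _ hHadj, frobInner_blockHankel_Etuple, hcard]
    rfl

/-- `‖H(E_{i,j,t})‖_F = √(min(t, T+1−t, d1, d2))` (with `t` 1-based), and the operator
`H*H` (with `H*` the adjoint of the block Hankel operator with respect to the Frobenius
inner products) satisfies `H*H(E_{i,j,t}) = min(t, T+1−t, d1, d2)·E_{i,j,t}`. -/
theorem blockHankel_Etuple_norm_and_adjoint (n d1 d2 T : ℕ) (hn : 1 ≤ n) (hd1 : 1 ≤ d1)
    (hd2 : 1 ≤ d2) (hT : T = d1 + d2 - 1)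
    (Hadj : Matrix (Fin d1 × Fin n) (Fin d2 × Fin n) ℝ → (Fin T → Matrix (Fin n) (Fin n) ℝ))
    (hHadj : ∀ (X : Fin T → Matrix (Fin n) (Fin n) ℝ)
        (M : Matrix (Fin d1 × Fin n) (Fin d2 × Fin n) ℝ),
        frobInner (blockHankel n d1 d2 T X) M = ∑ t, frobInner (X t) (Hadj M t))
    (i j : Fin n) (t : Fin T) :
    frobNorm (blockHankel n d1 d2 T (Etuple n T i j t))
        = Real.sqrt ((min (min (t.val + 1) (T - t.val)) (min d1 d2) : ℕ) : ℝ) ∧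
      Hadj (blockHankel n d1 d2 T (Etuple n T i j t))
        = ((min (min (t.val + 1) (T - t.val)) (min d1 d2) : ℕ) : ℝ) • Etuple n T i j t :=
  blockHankel_Etuple_norm_and_adjoint_general n d1 d2 T hT Hadj hHadj i j t

end
end

section
/- Let n ≥ 1, d1, d2 ≥ 1 and T = d1 + d2 − 1. Let A = Σ_{ℓ=1}^r λ_ℓ u_ℓ u_ℓ* = UΛU* be a positive semidefinite real n×n matrix with r positive eigenvalues λ_1,…,λ_r and corresponding orthonormal eigenvectors u_1,…,u_r, where Λ = diag(λ_1,…,λ_r) and U = [u_1 … u_r]. For m ≥ 1 define V_m(U,Λ) as the (n·m)×r matrix obtained by stacking the blocks UΛ^0, UΛ^1, …, UΛ^{m−1}, and define the diagonal r×r matrix Λ̄^m = diag(√(Σ_{s=0}^{m−1} λ_ℓ^{2s}))_{ℓ=1}^r. Set U_H = V_{d1}(U,Λ)(Λ̄^{d1})^{−1}, V_H = V_{d2}(U,Λ)(Λ̄^{d2})^{−1}, and D = Λ̄^{d1}·Λ·Λ̄^{d2}. Then H(Q_T(A)) = U_H D V_H*, U_H*U_H = I_r, and V_H*V_H = I_r;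 in particular, the nonzero singular values of H(Q_T(A)) are λ_ℓ·√(Σ_{t=0}^{d1−1} λ_ℓ^{2t})·√(Σ_{t=0}^{d2−1} λ_ℓ^{2t}) for ℓ = 1,…,r. -/
/-!
Since `Uᵀ U = 1`, every power `A ^ (k + 1)` equals `U Λ ^ (k + 1) Uᵀ`, so the `(i, j)` block
`A ^ (i + j + 1)` of the Hankel matrix is `(U Λ ^ i) Λ (U Λ ^ j)ᵀ`: the Hankel matrix factors as
`V_{d1} Λ V_{d2}ᵀ`. The columns of `V_m` are orthogonal with squared norms `Σ_{s<m} λ ^ (2s)`,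
which are at least `1` thanks to the `s = 0` term; normalizing them by `Λ̄^m` gives `U_H` and `V_H`
and moves the scalings into `D`.
-/

noncomputable section

open Matrix

/-- `Q_T(A) = (A, A², …, A^T)`. -/
def QT (n T : ℕ) (A : Matrix (Fin n) (Fin n) ℝ) : Fin T → Matrix (Fin n) (Fin n) ℝ :=
  fun t => A ^ (t.val + 1)

namespace Matrix

variable {R : Type*} {ι κ μ ν : Type*}

theorem mul_mul_pow_succ [Semiring R] [Fintype ι] [DecidableEq ι] [Fintype κ] [DecidableEq κ]
    (U : Matrix ι κ R) (W : Matrix κ ι R) (N : Matrix κ κ R) (hWU : W * U = 1) (k : ℕ) :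
    (U * N * W) ^ (k + 1) = U * N ^ (k + 1) * W := by
  induction k with
  | zero => simp
  | succ k ih =>
    rw [pow_succ, ih, pow_succ _ (k + 1)]
    simp only [Matrix.mul_assoc]
    rw [← Matrix.mul_assoc W U, hWU, Matrix.one_mul]

theorem mul_mul_transpose_eq_rescale [Field R] [Fintype μ] [DecidableEq μ] [Fintype ν]
    [DecidableEq ν] (V : Matrix ι μ R) (N : Matrix μ ν R) (W : Matrix κ ν R) {s : μ → R}
    {t : ν → R} (hs : ∀ i, s i ≠ 0) (ht : ∀ j, t j ≠ 0) :
    V * N * Wᵀ = (V * diagonal fun i => (s i)⁻¹) * (diagonal s * N * diagonal t) *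
      (W * diagonal fun j => (t j)⁻¹)ᵀ := by
  have hs' : (diagonal fun i => (s i)⁻¹) * diagonal s = 1 := by
    rw [diagonal_mul_diagonal, ← diagonal_one]
    exact congrArg diagonal (funext fun i => inv_mul_cancel₀ (hs i))
  have ht' : diagonal t * (diagonal fun j => (t j)⁻¹) = 1 := by
    rw [diagonal_mul_diagonal, ← diagonal_one]
    exact congrArg diagonal (funext fun j => mul_inv_cancel₀ (ht j))
  rw [transpose_mul, diagonal_transpose]
  simp only [Matrix.mul_assoc]
  rw [← Matrix.mul_assoc (diagonal _) (diagonal s), hs', Matrix.one_mul,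
    ← Matrix.mul_assoc (diagonal t), ht', Matrix.one_mul]

theorem transpose_mul_self_mul_diagonal_inv_sqrt [Fintype ι] [Fintype κ] [DecidableEq κ]
    (V : Matrix ι κ ℝ) {g : κ → ℝ} (hV : Vᵀ * V = diagonal g) (hg : ∀ l, 0 < g l) :
    (V * diagonal fun l => (√(g l))⁻¹)ᵀ * (V * diagonal fun l => (√(g l))⁻¹) = 1 := by
  rw [transpose_mul, diagonal_transpose, Matrix.mul_assoc, ← Matrix.mul_assoc Vᵀ, hV,
    diagonal_mul_diagonal, diagonal_mul_diagonal, ← diagonal_one]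
  refine congrArg diagonal (funext fun l => ?_)
  have hsqrt : √(g l) ≠ 0 := (Real.sqrt_pos.2 (hg l)).ne'
  field_simp
  exact (Real.sq_sqrt (hg l).le).symm

end Matrix

open Finset

theorem sum_range_pow_two_mul_pos (x : ℝ) {m : ℕ} (hm : 1 ≤ m) :
    0 < ∑ s ∈ range m, x ^ (2 * s) :=
  sum_pos' (fun s _ => by rw [pow_mul]; positivity)
    ⟨0, mem_range.2 hm, by simp⟩

section vandStack

variable {n r m : ℕ}

theorem vandStack_transpose_mul_self (U : Matrix (Fin n) (Fin r) ℝ) (N : Matrix (Fin r) (Fin r) ℝ) :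
    (vandStack n r m U N)ᵀ * vandStack n r m U N =
      ∑ i : Fin m, (U * N ^ (i : ℕ))ᵀ * (U * N ^ (i : ℕ)) := by
  ext l l'
  simp only [mul_apply, Matrix.sum_apply, Fintype.sum_prod_type, transpose_apply, vandStack,
    of_apply]

theorem vandStack_diagonal_transpose_mul_self (lam : Fin r → ℝ) (U : Matrix (Fin n) (Fin r) ℝ)
    (hU : Uᵀ * U = 1) :
    (vandStack n r m U (diagonal lam))ᵀ * vandStack n r m U (diagonal lam) =
      diagonal fun l => ∑ s ∈ range m, lam l ^ (2 * s) := by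
  have term (s : ℕ) : (U * diagonal lam ^ s)ᵀ * (U * diagonal lam ^ s) =
      diagonal fun l => lam l ^ (2 * s) := by
    rw [transpose_mul, Matrix.mul_assoc, ← Matrix.mul_assoc Uᵀ, hU, Matrix.one_mul, diagonal_pow,
      diagonal_transpose, diagonal_mul_diagonal]
    simp only [Pi.pow_apply, ← pow_add, two_mul]
  rw [vandStack_transpose_mul_self]
  simp only [term]
  rw [Fin.sum_univ_eq_sum_range (fun s => diagonal fun l => lam l ^ (2 * s))]
  ext l l'
  by_cases h : l = l' <;> simp [Matrix.sum_apply, h]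

theorem blockHankel_QT_mul_mul_transpose {d1 d2 T : ℕ} (hT : d1 + d2 ≤ T + 1)
    (U : Matrix (Fin n) (Fin r) ℝ) (N : Matrix (Fin r) (Fin r) ℝ) (hU : Uᵀ * U = 1)
    (hN : Nᵀ = N) :
    blockHankel n d1 d2 T (QT n T (U * N * Uᵀ)) =
      vandStack n r d1 U N * N * (vandStack n r d2 U N)ᵀ := by
  ext ⟨i, p⟩ ⟨j, q⟩
  have hij : i.val + j.val < T := by omega
  have block : (vandStack n r d1 U N * N * (vandStack n r d2 U N)ᵀ) (i, p) (j, q) =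
      (U * N ^ (i : ℕ) * N * (U * N ^ (j : ℕ))ᵀ) p q := by
    simp only [mul_apply, transpose_apply, vandStack, of_apply]
  rw [block, transpose_mul, transpose_pow, hN, blockHankel, of_apply, dif_pos hij, QT,
    mul_mul_pow_succ U Uᵀ N hU, Nat.add_right_comm, pow_add, pow_succ]
  simp only [Matrix.mul_assoc]

end vandStack

theorem blockHankel_QT_psd_svd_general (n d1 d2 T r : ℕ) (hd1 : 1 ≤ d1) (hd2 : 1 ≤ d2)
    (hT : T = d1 + d2 - 1)
    (lam : Fin r → ℝ)
    (U : Matrix (Fin n) (Fin r) ℝ) (hU : Uᵀ * U = 1)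
    (A : Matrix (Fin n) (Fin n) ℝ) (hA : A = U * Matrix.diagonal lam * Uᵀ) :
    letI lbar : ℕ → Matrix (Fin r) (Fin r) ℝ := fun m =>
      Matrix.diagonal fun l => Real.sqrt (∑ s ∈ Finset.range m, lam l ^ (2 * s))
    letI lbarInv : ℕ → Matrix (Fin r) (Fin r) ℝ := fun m =>
      Matrix.diagonal fun l => (Real.sqrt (∑ s ∈ Finset.range m, lam l ^ (2 * s)))⁻¹
    letI UH := vandStack n r d1 U (Matrix.diagonal lam) * lbarInv d1
    letI VH := vandStack n r d2 U (Matrix.diagonal lam) * lbarInv d2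
    letI D := lbar d1 * Matrix.diagonal lam * lbar d2
    blockHankel n d1 d2 T (QT n T A) = UH * D * VHᵀ ∧ UHᵀ * UH = 1 ∧ VHᵀ * VH = 1 := by
  have hsqrt {m : ℕ} (hm : 1 ≤ m) (l : Fin r) : √(∑ s ∈ range m, lam l ^ (2 * s)) ≠ 0 :=
    (Real.sqrt_pos.2 (sum_range_pow_two_mul_pos (lam l) hm)).ne'
  subst hA
  refine ⟨?_, ?_, ?_⟩
  · rw [blockHankel_QT_mul_mul_transpose (by omega) U _ hU (diagonal_transpose lam)]
    exact mul_mul_transpose_eq_rescale _ _ _ (hsqrt hd1) (hsqrt hd2)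
  · exact transpose_mul_self_mul_diagonal_inv_sqrt _
      (vandStack_diagonal_transpose_mul_self lam U hU) fun _ => sum_range_pow_two_mul_pos _ hd1
  · exact transpose_mul_self_mul_diagonal_inv_sqrt _
      (vandStack_diagonal_transpose_mul_self lam U hU) fun _ => sum_range_pow_two_mul_pos _ hd2

/-- For a positive semidefinite `A = UΛU*` with positive eigenvalues `λ_1,…,λ_r` and
orthonormal eigenvectors, setting `Λ̄^m = diag(√(Σ_{s<m} λ_ℓ^{2s}))`,
`U_H = V_{d1}(U,Λ)(Λ̄^{d1})⁻¹`, `V_H = V_{d2}(U,Λ)(Λ̄^{d2})⁻¹` and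
`D = Λ̄^{d1}·Λ·Λ̄^{d2}`, we get a compact SVD `H(Q_T(A)) = U_H D V_H*` with
`U_H* U_H = I` and `V_H* V_H = I`. -/
theorem blockHankel_QT_psd_svd (n d1 d2 T r : ℕ) (hn : 1 ≤ n) (hd1 : 1 ≤ d1) (hd2 : 1 ≤ d2)
    (hT : T = d1 + d2 - 1)
    (lam : Fin r → ℝ) (hlam : ∀ l, 0 < lam l)
    (U : Matrix (Fin n) (Fin r) ℝ) (hU : Uᵀ * U = 1)
    (A : Matrix (Fin n) (Fin n) ℝ) (hA : A = U * Matrix.diagonal lam * Uᵀ) :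
    letI lbar : ℕ → Matrix (Fin r) (Fin r) ℝ := fun m =>
      Matrix.diagonal fun l => Real.sqrt (∑ s ∈ Finset.range m, lam l ^ (2 * s))
    letI lbarInv : ℕ → Matrix (Fin r) (Fin r) ℝ := fun m =>
      Matrix.diagonal fun l => (Real.sqrt (∑ s ∈ Finset.range m, lam l ^ (2 * s)))⁻¹
    letI UH := vandStack n r d1 U (Matrix.diagonal lam) * lbarInv d1
    letI VH := vandStack n r d2 U (Matrix.diagonal lam) * lbarInv d2
    letI D := lbar d1 * Matrix.diagonal lam * lbar d2
    blockHankel n d1 d2 T (QT n T A) = UH * D * VHᵀ ∧ UHᵀ * UH = 1 ∧ VHᵀ * VH = 1 :=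
  blockHankel_QT_psd_svd_general n d1 d2 T r hd1 hd2 hT lam U hU A hA

end
end

section
/- Let n, T ≥ 1 with n·√T ≥ 9, let I = [n]×[n]×[T], let m < n²·T, and let β > 1. Let ω_1, …, ω_m be independent random indices, each uniformly distributed on I. Then with probability at least 1 − (n²T)^{1−β}, every element of I occurs fewer than (8/3)·β·log(n·T) times among ω_1, …, ω_m. Consequently, with probability at least 1 − (n²T)^{1−β}, the random operator R_Ω on T-tuples of real n×n matrices defined by R_Ω(L) = (n²T/m)·Σ_{ℓ=1}^m ⟨E_{ω_ℓ}, L⟩_F·E_{ω_ℓ} satisfies ‖R_Ω‖ ≤ (8/3)·β·(n²T/m)·log(n·T), where ‖R_Ω‖ is the operator norm with respect to the Frobenius norm. -/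
noncomputable section

open Matrix

/-- The Frobenius norm on tuples of matrices. -/
def tupNorm {n T : ℕ} (X : Fin T → Matrix (Fin n) (Fin n) ℝ) : ℝ :=
  Real.sqrt (∑ t, ∑ i, ∑ j, (X t i j) ^ 2)

/-- Operator norm (w.r.t. the Frobenius norm) of a map on matrix tuples. -/
def opNormT {n T : ℕ}
    (L : (Fin T → Matrix (Fin n) (Fin n) ℝ) → (Fin T → Matrix (Fin n) (Fin n) ℝ)) : ℝ :=
  sInf {c : ℝ | 0 ≤ c ∧ ∀ X, tupNorm (L X) ≤ c * tupNorm X}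

/-- The sampling operator of `m` i.i.d. uniform space-time indices `ω_1,…,ω_m`:
`R_Ω(L) = (n²T/m)·Σ_ℓ ⟨E_{ω_ℓ}, L⟩_F·E_{ω_ℓ}`. -/
def RUnif (n T m : ℕ) (ω : Fin m → Fin n × Fin n × Fin T)
    (L : Fin T → Matrix (Fin n) (Fin n) ℝ) : Fin T → Matrix (Fin n) (Fin n) ℝ :=
  fun t => Matrix.of fun i j =>
    ((n : ℝ) ^ 2 * (T : ℝ) / (m : ℝ)) * ∑ ℓ : Fin m, if ω ℓ = (i, j, t) then L t i j else 0

/-!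
Write `N = n²T ≥ m`. The draws that hit a fixed index at least `k` times are covered by the
`C(m, k)` ways of forcing `k` positions onto it, so there are at most `C(m, k) N^(m-k) ≤ N^m / k!`
of them, and a union bound over the `N` indices leaves at most `N^(m+1) / k!` bad draws.
For `k = ⌈(8/3) β log(nT)⌉` we have `k ≥ 6 > e^(7/4)`, hence
`k! ≥ (k/e)^k ≥ e^(3k/4) ≥ (nT)^(2β) ≥ N^β`, which is the claimed probability.
On a good draw `R_Ω` multiplies the `(i, j, t)` entry by `N/m` times the multiplicity of
`(i, j, t)`, so its Frobenius operator norm is at most `(N/m) (8/3) β log(nT)`.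
-/

open Finset Nat

lemma Real.exp_seven_div_four_lt_six : Real.exp (7 / 4) < 6 := by
  refine lt_of_pow_lt_pow_left₀ 4 (by norm_num) ?_
  calc Real.exp (7 / 4) ^ 4 = Real.exp 1 ^ 7 := by simp only [← Real.exp_nat_mul]; norm_num
    _ < 2.7182818286 ^ 7 := by gcongr; exact Real.exp_one_lt_d9
    _ < 6 ^ 4 := by norm_num

lemma Real.exp_three_div_four_mul_le_factorial {k : ℕ} (hk : 6 ≤ k) :
    Real.exp (3 / 4 * k) ≤ k ! := by
  have hk0 : (0 : ℝ) < k := by positivity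
  have hbase : Real.exp (3 / 4) ≤ k / Real.exp 1 := by
    rw [le_div_iff₀ (Real.exp_pos 1), ← Real.exp_add]
    calc Real.exp (3 / 4 + 1) ≤ 6 := by norm_num; exact Real.exp_seven_div_four_lt_six.le
      _ ≤ k := by exact_mod_cast hk
  calc Real.exp (3 / 4 * k) = Real.exp (3 / 4) ^ k := by rw [← Real.exp_nat_mul, mul_comm]
    _ ≤ (k / Real.exp 1) ^ k := by gcongr
    _ = (k : ℝ) ^ k / Real.exp k := by rw [div_pow, ← Real.exp_nat_mul, mul_one]
    _ ≤ k ! := by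
      rw [div_le_iff₀ (Real.exp_pos _), ← div_le_iff₀' (by positivity)]
      exact Real.pow_div_factorial_le_exp (k : ℝ) hk0.le k

lemma rpow_le_factorial_ceil {N L β : ℝ} (hN : 0 < N) (hβ : 1 ≤ β) (hL : 2 ≤ L)
    (hNL : Real.log N ≤ 2 * L) : N ^ β ≤ (⌈8 / 3 * β * L⌉₊ ! : ℝ) := by
  set k := ⌈8 / 3 * β * L⌉₊
  have hk : 8 / 3 * β * L ≤ k := Nat.le_ceil _
  have hk6 : 6 ≤ k := by
    have : (5 : ℝ) < k := by nlinarith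
    exact_mod_cast this
  calc N ^ β = Real.exp (Real.log N * β) := Real.rpow_def_of_pos hN β
    _ ≤ Real.exp (3 / 4 * k) := Real.exp_le_exp.mpr (by nlinarith)
    _ ≤ k ! := Real.exp_three_div_four_mul_le_factorial hk6

section Counting

variable {γ : Type*} [Fintype γ] [DecidableEq γ] {m : ℕ}

lemma card_filter_forall_mem_eq_pow (c : γ) (S : Finset (Fin m)) :
    #{ω : Fin m → γ | ∀ ℓ ∈ S, ω ℓ = c} = Fintype.card γ ^ (m - #S) := by
  have hpi : ({ω : Fin m → γ | ∀ ℓ ∈ S, ω ℓ = c} : Finset _)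
      = Fintype.piFinset fun ℓ => if ℓ ∈ S then {c} else univ := by
    ext ω
    simp only [mem_filter, mem_univ, true_and, Fintype.mem_piFinset]
    refine forall_congr' fun ℓ => ?_
    split_ifs <;> simp [*]
  simp [hpi, apply_ite, prod_ite, filter_not, card_sdiff]

lemma card_filter_le_card_fiber_le (c : γ) (k : ℕ) :
    #{ω : Fin m → γ | k ≤ #{ℓ | ω ℓ = c}} ≤ m.choose k * Fintype.card γ ^ (m - k) := by
  have hsub : ({ω : Fin m → γ | k ≤ #{ℓ | ω ℓ = c}} : Finset _)
      ⊆ (powersetCard k univ).biUnion fun S => {ω | ∀ ℓ ∈ S, ω ℓ = c} := by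
    intro ω hω
    obtain ⟨S, hS, hSk⟩ := exists_subset_card_eq (mem_filter.mp hω).2
    simp only [mem_biUnion, mem_powersetCard, mem_filter, mem_univ, true_and]
    exact ⟨S, ⟨subset_univ S, hSk⟩, fun ℓ hℓ => (mem_filter.mp (hS hℓ)).2⟩
  calc _ ≤ _ := card_le_card hsub
    _ ≤ ∑ S ∈ powersetCard k univ, #{ω : Fin m → γ | ∀ ℓ ∈ S, ω ℓ = c} := card_biUnion_le
    _ = m.choose k * Fintype.card γ ^ (m - k) := by
      rw [sum_congr rfl fun S hS => by rw [card_filter_forall_mem_eq_pow, (mem_powersetCard.mp hS).2]]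
      simp

lemma factorial_mul_card_filter_exists_le (hm : m ≤ Fintype.card γ) (k : ℕ) :
    k ! * #{ω : Fin m → γ | ∃ c, k ≤ #{ℓ | ω ℓ = c}} ≤ Fintype.card γ ^ (m + 1) := by
  set N := Fintype.card γ
  have hone : k ! * (m.choose k * N ^ (m - k)) ≤ N ^ m := by
    rcases le_or_gt k m with hkm | hkm
    · calc k ! * (m.choose k * N ^ (m - k)) = m.descFactorial k * N ^ (m - k) := by
            rw [descFactorial_eq_factorial_mul_choose, mul_assoc]
        _ ≤ N ^ k * N ^ (m - k) := by
            gcongr; exact (descFactorial_le_pow m k).trans (Nat.pow_le_pow_left hm k)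
        _ = N ^ m := by rw [← pow_add, Nat.add_sub_cancel' hkm]
    · simp [choose_eq_zero_of_lt hkm]
  have hunion : ({ω : Fin m → γ | ∃ c, k ≤ #{ℓ | ω ℓ = c}} : Finset _)
      = univ.biUnion fun c => {ω | k ≤ #{ℓ | ω ℓ = c}} := by
    ext ω; simp
  calc k ! * #{ω : Fin m → γ | ∃ c, k ≤ #{ℓ | ω ℓ = c}}
      ≤ k ! * ∑ c : γ, #{ω : Fin m → γ | k ≤ #{ℓ | ω ℓ = c}} := by
        rw [hunion]; gcongr; exact card_biUnion_le
    _ ≤ k ! * ∑ _c : γ, m.choose k * N ^ (m - k) := by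
        gcongr with c; exact card_filter_le_card_fiber_le c k
    _ ≤ N ^ (m + 1) := by
        rw [sum_const, Finset.card_univ, smul_eq_mul, mul_left_comm, pow_succ']
        gcongr

lemma pow_sub_div_factorial_le_card_filter_forall_lt (hm : m ≤ Fintype.card γ) (K : ℝ) :
    (Fintype.card γ : ℝ) ^ m - Fintype.card γ ^ (m + 1) / ⌈K⌉₊ !
      ≤ #{ω : Fin m → γ | ∀ c, (#{ℓ | ω ℓ = c} : ℝ) < K} := by
  set k := ⌈K⌉₊
  have hcompl : ({ω : Fin m → γ | ∀ c, (#{ℓ | ω ℓ = c} : ℝ) < K} : Finset _)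
      = ({ω | ∃ c, k ≤ #{ℓ | ω ℓ = c}} : Finset (Fin m → γ))ᶜ := by
    ext ω; simp [k, Nat.ceil_le]
  have hbad : (k ! : ℝ) * #{ω : Fin m → γ | ∃ c, k ≤ #{ℓ | ω ℓ = c}}
      ≤ Fintype.card γ ^ (m + 1) := by exact_mod_cast factorial_mul_card_filter_exists_le hm k
  rw [hcompl, card_compl, Nat.cast_sub (card_le_univ _), Fintype.card_fun, Fintype.card_fin,
    Nat.cast_pow, sub_le_sub_iff_left, le_div_iff₀ (by positivity), mul_comm]
  exact hbad

end Counting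

section OperatorNorm

variable {n T : ℕ}

lemma tupNorm_le_of_abs_le {X Y : Fin T → Matrix (Fin n) (Fin n) ℝ} {c : ℝ} (hc : 0 ≤ c)
    (h : ∀ t i j, |Y t i j| ≤ c * |X t i j|) : tupNorm Y ≤ c * tupNorm X := by
  have hsq : ∑ t, ∑ i, ∑ j, Y t i j ^ 2 ≤ c ^ 2 * ∑ t, ∑ i, ∑ j, X t i j ^ 2 := by
    simp only [mul_sum]
    gcongr with t _ i _ j _
    rw [← mul_pow, sq_le_sq, abs_mul, abs_of_nonneg hc]
    exact h t i j
  calc tupNorm Y ≤ √(c ^ 2 * ∑ t, ∑ i, ∑ j, X t i j ^ 2) := Real.sqrt_le_sqrt hsq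
    _ = c * tupNorm X := by rw [Real.sqrt_mul (sq_nonneg c), Real.sqrt_sq hc, tupNorm]

lemma opNormT_le {L : (Fin T → Matrix (Fin n) (Fin n) ℝ) → (Fin T → Matrix (Fin n) (Fin n) ℝ)}
    {c : ℝ} (hc : 0 ≤ c) (h : ∀ X, tupNorm (L X) ≤ c * tupNorm X) : opNormT L ≤ c :=
  csInf_le ⟨0, fun _ hc' => hc'.1⟩ ⟨hc, h⟩

lemma RUnif_apply {m : ℕ} (ω : Fin m → Fin n × Fin n × Fin T)
    (X : Fin T → Matrix (Fin n) (Fin n) ℝ) (t : Fin T) (i j : Fin n) :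
    RUnif n T m ω X t i j = (n ^ 2 * T / m) * #{ℓ | ω ℓ = (i, j, t)} * X t i j := by
  simp [RUnif, ← sum_filter, mul_assoc]

lemma opNormT_RUnif_le {m : ℕ} {ω : Fin m → Fin n × Fin n × Fin T} {K : ℝ} (hK : 0 ≤ K)
    (hω : ∀ idx, (#{ℓ | ω ℓ = idx} : ℝ) ≤ K) :
    opNormT (RUnif n T m ω) ≤ (n ^ 2 * T / m) * K := by
  refine opNormT_le (by positivity) fun X => tupNorm_le_of_abs_le (by positivity) fun t i j => ?_
  rw [RUnif_apply, abs_mul, abs_of_nonneg (by positivity)]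
  gcongr
  exact hω _

end OperatorNorm

theorem uniform_sampling_repetition_bound_general (n T m : ℕ)
    (h9 : (9 : ℝ) ≤ (n : ℝ) * Real.sqrt (T : ℝ)) (hm : m < n ^ 2 * T)
    (β : ℝ) (hβ : 1 < β) :
    ((Nat.card {ω : Fin m → Fin n × Fin n × Fin T //
          ∀ idx : Fin n × Fin n × Fin T,
            ((Finset.univ.filter fun ℓ => ω ℓ = idx).card : ℝ)
              < (8 / 3) * β * Real.log ((n : ℝ) * (T : ℝ))} : ℝ)
        ≥ (1 - ((n : ℝ) ^ 2 * (T : ℝ)) ^ ((1 : ℝ) - β)) * ((n : ℝ) ^ 2 * (T : ℝ)) ^ m) ∧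
      ((Nat.card {ω : Fin m → Fin n × Fin n × Fin T //
          opNormT (RUnif n T m ω)
            ≤ (8 / 3) * β * ((n : ℝ) ^ 2 * (T : ℝ) / (m : ℝ))
              * Real.log ((n : ℝ) * (T : ℝ))} : ℝ)
        ≥ (1 - ((n : ℝ) ^ 2 * (T : ℝ)) ^ ((1 : ℝ) - β)) * ((n : ℝ) ^ 2 * (T : ℝ)) ^ m) := by
  set N : ℝ := n ^ 2 * T
  set L := Real.log (n * T)
  have hcard : Fintype.card (Fin n × Fin n × Fin T) = n ^ 2 * T := by simp [sq, mul_assoc]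
  have hN : 0 < N := by unfold N; exact_mod_cast (Nat.zero_le m).trans_lt hm
  have hT : (T : ℝ) ≤ T ^ 2 := by exact_mod_cast Nat.le_self_pow two_ne_zero T
  have hnT : (9 : ℝ) ≤ n * T := h9.trans <| by
    gcongr
    exact Real.sqrt_le_iff.mpr ⟨by positivity, hT⟩
  have hL : 2 ≤ L := by
    rw [Real.le_log_iff_exp_le (by linarith)]
    calc Real.exp 2 = Real.exp 1 ^ 2 := by rw [← Real.exp_nat_mul]; norm_num
      _ ≤ 3 ^ 2 := by gcongr; exact Real.exp_one_lt_three.le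
      _ ≤ n * T := by linarith
  have hNL : Real.log N ≤ 2 * L := by
    calc Real.log N ≤ Real.log ((n * T) ^ 2) :=
          Real.log_le_log hN (by unfold N; rw [mul_pow]; gcongr)
      _ = 2 * L := by rw [Real.log_pow, Nat.cast_ofNat]
  have hgood : (1 - N ^ (1 - β)) * N ^ m
      ≤ #{ω : Fin m → Fin n × Fin n × Fin T | ∀ idx, (#{ℓ | ω ℓ = idx} : ℝ) < 8 / 3 * β * L} := by
    calc (1 - N ^ (1 - β)) * N ^ m = N ^ m - N ^ (m + 1) / N ^ β := by
          rw [Real.rpow_sub hN, Real.rpow_one]; ring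
      _ ≤ N ^ m - N ^ (m + 1) / ⌈8 / 3 * β * L⌉₊ ! := by
          gcongr; exact rpow_le_factorial_ceil hN hβ.le hL hNL
      _ ≤ _ := by
          have := pow_sub_div_factorial_le_card_filter_forall_lt (γ := Fin n × Fin n × Fin T)
            (hcard ▸ hm.le) (8 / 3 * β * L)
          rw [hcard] at this
          push_cast at this
          exact this
  have hsub : ∀ ω : Fin m → Fin n × Fin n × Fin T,
      (∀ idx, (#{ℓ | ω ℓ = idx} : ℝ) < 8 / 3 * β * L) →
        opNormT (RUnif n T m ω) ≤ 8 / 3 * β * (N / m) * L := fun ω hω => by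
    rw [mul_comm (8 / 3 * β), mul_assoc]
    exact opNormT_RUnif_le (by positivity) fun idx => (hω idx).le
  simp only [Nat.card_eq_fintype_card, Fintype.card_subtype, ge_iff_le]
  refine ⟨hgood, hgood.trans ?_⟩
  exact_mod_cast card_le_card (monotone_filter_right _ fun ω _ => hsub ω)

/-- With `ω_1,…,ω_m` i.i.d. uniform on `I = [n]×[n]×[T]` (formulated by counting
realizations `ω : Fin m → I`, each of the `(n²T)^m` realizations being equally likely),
with probability at least `1 − (n²T)^{1−β}` every index of `I` occurs fewer than
`(8/3)β·log(nT)` times among `ω_1,…,ω_m`; consequently, with probability at least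
`1 − (n²T)^{1−β}` the sampling operator `R_Ω` satisfies
`‖R_Ω‖ ≤ (8/3)β(n²T/m)·log(nT)`. -/
theorem uniform_sampling_repetition_bound (n T m : ℕ) (hn : 1 ≤ n) (hT : 1 ≤ T)
    (h9 : (9 : ℝ) ≤ (n : ℝ) * Real.sqrt (T : ℝ)) (hm : m < n ^ 2 * T)
    (β : ℝ) (hβ : 1 < β) :
    ((Nat.card {ω : Fin m → Fin n × Fin n × Fin T //
          ∀ idx : Fin n × Fin n × Fin T,
            ((Finset.univ.filter fun ℓ => ω ℓ = idx).card : ℝ)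
              < (8 / 3) * β * Real.log ((n : ℝ) * (T : ℝ))} : ℝ)
        ≥ (1 - ((n : ℝ) ^ 2 * (T : ℝ)) ^ ((1 : ℝ) - β)) * ((n : ℝ) ^ 2 * (T : ℝ)) ^ m) ∧
      ((Nat.card {ω : Fin m → Fin n × Fin n × Fin T //
          opNormT (RUnif n T m ω)
            ≤ (8 / 3) * β * ((n : ℝ) ^ 2 * (T : ℝ) / (m : ℝ))
              * Real.log ((n : ℝ) * (T : ℝ))} : ℝ)
        ≥ (1 - ((n : ℝ) ^ 2 * (T : ℝ)) ^ ((1 : ℝ) - β)) * ((n : ℝ) ^ 2 * (T : ℝ)) ^ m) :=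
  uniform_sampling_repetition_bound_general n T m h9 hm β hβ
end
end
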